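/- Let Z be a standard normal random variable, μ ∈ ℝ, σ > 0, ξ > 0, and let T be the TTF map T(z) = μ + σ·(1/ξ)·[erfc(|z−μ|/(σ√2))^{−ξ} − 1] restricted to the right side z ≥ μ (with sign s = +1). Then the transformed variable X = T(μ + σ|Z|) has a Pareto-type right tail with index 1/ξ: P(X − μ > σ·x) = (1 + ξx)^{−1/ξ} for all x ≥ 0. In particular, X − μ, conditioned on being positive, follows a Generalized Pareto distribution with shape ξ and scale σ. -/

import Mathlib

/-!
The map `TTFright` is built so that `X - μ₀ > σ x` exactly when `erfc (|Z| / √2) < (1 + ξ x)^(-1/ξ)`.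
Since `erfc (c / √2)` is the survival function `P(|Z| > c)` of the folded Gaussian, and `erfc` is a
continuous decreasing bijection of `[0, ∞)` onto `(0, 1]`, writing the threshold as `erfc c` turns
this event into `|Z| > c √2`, whose probability is `erfc c = (1 + ξ x)^(-1/ξ)`.
-/

open Real Set MeasureTheory ProbabilityTheory

/-- The complementary error function `erfc x = (2/√π) ∫_x^∞ e^{-t²} dt`. -/
noncomputable def erfc (x : ℝ) : ℝ :=
  (2 / Real.sqrt π) * ∫ t in Set.Ioi x, Real.exp (-t ^ 2)

/-- The right-sided Tail Transform Flow map (sign `s = +1`). -/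
noncomputable def TTFright (μ₀ σ ξ : ℝ) (z : ℝ) : ℝ :=
  μ₀ + σ * (1 / ξ) * (erfc (|z - μ₀| / (σ * Real.sqrt 2)) ^ (-ξ) - 1)

open Filter Topology

lemma integrable_exp_neg_sq : Integrable fun t : ℝ => exp (-t ^ 2) := by
  simpa using integrable_exp_neg_mul_sq one_pos

lemma erfc_sub_erfc (a b : ℝ) :
    erfc a - erfc b = 2 / √π * ∫ t in a..b, exp (-t ^ 2) := by
  rw [erfc, erfc, ← mul_sub, ← intervalIntegral.integral_interval_add_Ioi
    integrable_exp_neg_sq.integrableOn integrable_exp_neg_sq.integrableOn, add_sub_cancel_right]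

lemma erfc_zero : erfc 0 = 1 := by
  have h := integral_gaussian_Ioi 1
  simp only [neg_mul, one_mul, div_one] at h
  rw [erfc, h]
  field_simp

lemma continuous_erfc : Continuous erfc := by
  have h : erfc = fun x => erfc 0 - 2 / √π * ∫ t in (0 : ℝ)..x, exp (-t ^ 2) := by
    funext x
    rw [← erfc_sub_erfc, sub_sub_cancel]
  rw [h]
  exact continuous_const.sub
    (continuous_const.mul (integrable_exp_neg_sq.continuous_primitive 0))

lemma strictAnti_erfc : StrictAnti erfc := fun a b hab =>
  sub_pos.1 <| (erfc_sub_erfc a b).symm ▸ mul_pos (by positivity)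
    (intervalIntegral.intervalIntegral_pos_of_pos
      integrable_exp_neg_sq.intervalIntegrable (fun t => exp_pos _) hab)

lemma tendsto_erfc_atTop : Tendsto erfc atTop (𝓝 0) := by
  have h := (tendsto_integral_Ioi_zero (f := fun t : ℝ => exp (-t ^ 2))
    (μ := volume) tendsto_id).const_mul (2 / √π)
  rwa [mul_zero] at h

lemma erfc_pos (x : ℝ) : 0 < erfc x :=
  (strictAnti_erfc.antitone.le_of_tendsto tendsto_erfc_atTop (x + 1)).trans_lt
    (strictAnti_erfc (lt_add_one x))

lemma Ioc_zero_one_subset_erfc_image_Ici : Ioc 0 1 ⊆ erfc '' Ici 0 := by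
  rw [← erfc_zero]
  exact isPreconnected_Ici.intermediate_value_Ioc self_mem_Ici
    (le_principal_iff.mpr (Ici_mem_atTop 0)) continuous_erfc.continuousOn tendsto_erfc_atTop

lemma integral_Ioi_exp_neg_sq_div_two (c : ℝ) :
    ∫ x in Ioi c, exp (-x ^ 2 / 2) = √2 * ∫ t in Ioi (c / √2), exp (-t ^ 2) := by
  have h := integral_comp_mul_right_Ioi (fun t => exp (-t ^ 2)) c (b := (√2)⁻¹) (by positivity)
  simp only [← div_eq_mul_inv, div_pow, sq_sqrt zero_le_two, inv_inv, smul_eq_mul, ← neg_div] at h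
  exact h

lemma gaussianReal_Ioi (c : ℝ) : (gaussianReal 0 1 (Ioi c)).toReal = erfc (c / √2) / 2 := by
  rw [gaussianReal_apply_eq_integral _ one_ne_zero, ENNReal.toReal_ofReal
    (setIntegral_nonneg measurableSet_Ioi fun _ _ => gaussianPDFReal_nonneg _ _ _)]
  simp only [gaussianPDFReal, NNReal.coe_one, mul_one, sub_zero, integral_const_mul,
    integral_Ioi_exp_neg_sq_div_two, erfc, sqrt_mul zero_le_two]
  field_simp

lemma gaussianReal_abs_gt {c : ℝ} (hc : 0 ≤ c) :
    (gaussianReal 0 1 {y | c < |y|}).toReal = erfc (c / √2) := by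
  have hset : {y : ℝ | c < |y|} = Ioi c ∪ (fun y => -y) ⁻¹' Ioi c := by
    ext y
    simp only [mem_ofPred_eq, lt_abs, mem_union, mem_Ioi, mem_preimage]
  have hdisj : Disjoint (Ioi c) ((fun y : ℝ => -y) ⁻¹' Ioi c) :=
    disjoint_left.2 fun y h₁ h₂ => by simp only [mem_Ioi, mem_preimage] at h₁ h₂; linarith
  have hneg : gaussianReal 0 1 ((fun y => -y) ⁻¹' Ioi c) = gaussianReal 0 1 (Ioi c) := by
    rw [← Measure.map_apply measurable_neg measurableSet_Ioi, gaussianReal_map_neg, neg_zero]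
  rw [hset, measure_union hdisj (measurableSet_Ioi.preimage measurable_neg), hneg,
    ENNReal.toReal_add (measure_ne_top _ _) (measure_ne_top _ _), gaussianReal_Ioi]
  ring

lemma lt_TTFright_sub_iff {μ₀ σ ξ x r : ℝ} (hσ : 0 < σ) (hξ : 0 < ξ) (hx : 0 < 1 + ξ * x)
    (hr : 0 ≤ r) :
    σ * x < TTFright μ₀ σ ξ (μ₀ + σ * r) - μ₀ ↔ erfc (r / √2) < (1 + ξ * x) ^ (-1 / ξ) := by
  rw [TTFright, add_sub_cancel_left, add_sub_cancel_left, abs_of_nonneg (by positivity),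
    mul_div_mul_left _ _ hσ.ne', show -1 / ξ = (-ξ)⁻¹ by rw [neg_div, one_div, inv_neg],
    lt_rpow_inv_iff_of_neg (erfc_pos _) hx (neg_lt_zero.2 hξ), mul_assoc,
    mul_lt_mul_iff_right₀ hσ, one_div_mul_eq_div, lt_div_iff₀ hξ]
  constructor <;> intro h <;> linarith

theorem TTF_of_folded_gaussian_is_GPD_general
    {Ω : Type*} [MeasureSpace Ω] (P : Measure Ω)
    (Z : Ω → ℝ) (hZmeas : Measurable Z)
    (hZ : Measure.map Z P = ProbabilityTheory.gaussianReal 0 1)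
    (μ₀ σ ξ : ℝ) (hσ : 0 < σ) (hξ : 0 < ξ) :
    ∀ x : ℝ, 0 ≤ x →
      (P {ω | σ * x < TTFright μ₀ σ ξ (μ₀ + σ * |Z ω|) - μ₀}).toReal
        = (1 + ξ * x) ^ (-1 / ξ) := by
  intro x hx
  have hx' : 0 < 1 + ξ * x := by positivity
  obtain ⟨c, hc, hct⟩ := Ioc_zero_one_subset_erfc_image_Ici
    ⟨rpow_pos_of_pos hx' _, rpow_le_one_of_one_le_of_nonpos (le_add_of_nonneg_right (by positivity))
      (div_nonpos_of_nonpos_of_nonneg neg_one_lt_zero.le hξ.le)⟩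
  have hevent : {ω | σ * x < TTFright μ₀ σ ξ (μ₀ + σ * |Z ω|) - μ₀}
      = Z ⁻¹' {y | c * √2 < |y|} := by
    ext ω
    rw [mem_ofPred_eq, lt_TTFright_sub_iff hσ hξ hx' (abs_nonneg _), ← hct,
      strictAnti_erfc.lt_iff_gt, lt_div_iff₀ (by positivity)]
    rfl
  rw [hevent, ← Measure.map_apply hZmeas (measurableSet_lt measurable_const measurable_abs), hZ,
    gaussianReal_abs_gt (mul_nonneg hc (sqrt_nonneg 2)),
    mul_div_cancel_right₀ _ (sqrt_pos.2 two_pos).ne', hct]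

/-- for a standard normal `Z`, the TTF-transformed variable
`X = T(μ₀ + σ |Z|)` has an exact Generalized Pareto right tail:
`P(X - μ₀ > σ x) = (1 + ξ x)^{-1/ξ}` for all `x ≥ 0`. -/
theorem TTF_of_folded_gaussian_is_GPD
    {Ω : Type*} [MeasureSpace Ω] (P : Measure Ω) [IsProbabilityMeasure P]
    (Z : Ω → ℝ) (hZmeas : Measurable Z)
    (hZ : Measure.map Z P = ProbabilityTheory.gaussianReal 0 1)
    (μ₀ σ ξ : ℝ) (hσ : 0 < σ) (hξ : 0 < ξ) :
    ∀ x : ℝ, 0 ≤ x →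
      (P {ω | σ * x < TTFright μ₀ σ ξ (μ₀ + σ * |Z ω|) - μ₀}).toReal
        = (1 + ξ * x) ^ (-1 / ξ) :=
  TTF_of_folded_gaussian_is_GPD_general P Z hZmeas hZ μ₀ σ ξ hσ hξ
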